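/- arXiv:1405.3678 — 5 statements merged into one kernel-verified Lean document; each statement's English description precedes it below -/
import Mathlib

section
/- Let T be a 3×3 unitary matrix whose eigenvalues are roots of unity, such that for each j the eigenvalues of T·Sⱼ are also roots of unity (Sⱼ the diagonal sign matrices). If |T_{jj}| = 1/2, then T_{jj} = ξ/2 for some root of unity ξ. -/
/-!
Since `Tr (T Sⱼ) + Tr T = 2 Tⱼⱼ`, the number `2 Tⱼⱼ` is a sum of six eigenvalues, hence of six
roots of unity, and it lies on the unit circle. Such a sum `x` is a root of unity (Kronecker):
`x` is an algebraic integer of a cyclotomic field, and under every complex embedding complex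
conjugation inverts the summands, so `x · x̄ = 1` holds in the field itself and all conjugates
of `x` lie on the unit circle.
-/

def IsRootOfUnity (z : ℂ) : Prop := ∃ n : ℕ, 0 < n ∧ z ^ n = 1

def S (j : Fin 3) : Matrix (Fin 3) (Fin 3) ℂ :=
  Matrix.diagonal (fun k => if k = j then 1 else -1)

open Polynomial ComplexConjugate

lemma exists_pos_pow_eq_one_of_forall_mem (M : Multiset ℂ) (hM : ∀ z ∈ M, IsRootOfUnity z) :
    ∃ N : ℕ, 0 < N ∧ ∀ z ∈ M, z ^ N = 1 := by
  induction M using Multiset.induction with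
  | empty => exact ⟨1, one_pos, by simp⟩
  | cons a s ih =>
    obtain ⟨N, hN, hNs⟩ := ih fun z hz => hM z (Multiset.mem_cons_of_mem hz)
    obtain ⟨m, hm, ha⟩ := hM a (Multiset.mem_cons_self a s)
    refine ⟨m * N, Nat.mul_pos hm hN, fun z hz => ?_⟩
    rcases Multiset.mem_cons.mp hz with rfl | hz
    · rw [pow_mul, ha, one_pow]
    · rw [mul_comm, pow_mul, hNs z hz, one_pow]

lemma exists_multiset_map_eq_of_pow_eq_one {K : Type*} [Field K] (φ : K →+* ℂ) {N : ℕ}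
    [NeZero N] {ζ : K} (hζ : IsPrimitiveRoot ζ N) (M : Multiset ℂ) (hM : ∀ z ∈ M, z ^ N = 1) :
    ∃ W : Multiset K, W.map φ = M ∧ ∀ w ∈ W, w ^ N = 1 := by
  have hpre : ∀ z ∈ M, ∃ w : K, w ^ N = 1 ∧ φ w = z := by
    intro z hz
    obtain ⟨i, -, hi⟩ := (hζ.map_of_injective φ.injective).eq_pow_of_pow_eq_one (hM z hz)
    exact ⟨ζ ^ i, by rw [← pow_mul, mul_comm, pow_mul, hζ.pow_eq_one, one_pow], by
      rw [map_pow, hi]⟩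
  choose! f hf using hpre
  refine ⟨M.map f, ?_, fun w hw => ?_⟩
  · rw [Multiset.map_map]
    exact (Multiset.map_congr rfl fun z hz => (hf z hz).2).trans (Multiset.map_id' M)
  · obtain ⟨z, hz, rfl⟩ := Multiset.mem_map.mp hw
    exact (hf z hz).1

lemma conj_map_multiset_sum_of_pow_eq_one {K : Type*} [Field K] (ψ : K →+* ℂ) {N : ℕ}
    (hN : N ≠ 0) {W : Multiset K} (hW : ∀ w ∈ W, w ^ N = 1) :
    conj (ψ W.sum) = ψ (W.map (·⁻¹)).sum := by
  simp only [map_multiset_sum, Multiset.map_map]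
  congr 1
  refine Multiset.map_congr rfl fun w hw => ?_
  have hnorm : ‖ψ w‖ = 1 :=
    Complex.norm_eq_one_of_pow_eq_one (by rw [← map_pow, hW w hw, map_one]) hN
  simp only [Function.comp_apply, map_inv₀, Complex.inv_eq_conj hnorm]

lemma exists_pow_eq_one_of_norm_map_multiset_sum_eq_one {K : Type*} [Field K] [NumberField K]
    (φ : K →+* ℂ) {N : ℕ} (hN : 0 < N) {W : Multiset K} (hW : ∀ w ∈ W, w ^ N = 1)
    (h1 : ‖φ W.sum‖ = 1) : ∃ n : ℕ, 0 < n ∧ W.sum ^ n = 1 := by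
  have hconj := fun ψ : K →+* ℂ => conj_map_multiset_sum_of_pow_eq_one ψ hN.ne' hW
  have hinv : W.sum * (W.map (·⁻¹)).sum = 1 := φ.injective <| by
    rw [map_mul, ← hconj, Complex.mul_conj', h1, map_one, Complex.ofReal_one, one_pow]
  have hnorm : ∀ ψ : K →+* ℂ, ‖ψ W.sum‖ = 1 := by
    intro ψ
    have h : (‖ψ W.sum‖ ^ 2 : ℂ) = 1 := by
      rw [← Complex.mul_conj', hconj, ← map_mul, hinv, map_one]
    exact (pow_eq_one_iff_of_nonneg (norm_nonneg _) two_ne_zero).mp (by exact_mod_cast h)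
  have hint : IsIntegral ℤ W.sum := IsIntegral.multiset_sum fun w hw =>
    IsIntegral.of_pow hN (by rw [hW w hw]; exact isIntegral_one)
  obtain ⟨n, hn, hxn⟩ := NumberField.Embeddings.pow_eq_one_of_norm_eq_one K ℂ hint hnorm
  exact ⟨n, hn, hxn⟩

lemma isRootOfUnity_multiset_sum_of_norm_eq_one (M : Multiset ℂ)
    (hM : ∀ z ∈ M, IsRootOfUnity z) (h1 : ‖M.sum‖ = 1) : IsRootOfUnity M.sum := by
  obtain ⟨N, hN, hNM⟩ := exists_pos_pow_eq_one_of_forall_mem M hM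
  have : NeZero N := ⟨hN.ne'⟩
  have : NeZero (N : ℚ) := ⟨by exact_mod_cast hN.ne'⟩
  have : IsCyclotomicExtension {N} ℚ (CyclotomicField N ℚ) :=
    CyclotomicField.isCyclotomicExtension N ℚ
  let φ : CyclotomicField N ℚ →+* ℂ := (IsAlgClosed.lift (R := ℚ) (M := ℂ)).toRingHom
  obtain ⟨W, rfl, hW⟩ := exists_multiset_map_eq_of_pow_eq_one φ
    (IsCyclotomicExtension.zeta_spec N ℚ (CyclotomicField N ℚ)) M hNM
  rw [← map_multiset_sum] at h1 ⊢
  obtain ⟨n, hn, hWn⟩ := exists_pow_eq_one_of_norm_map_multiset_sum_eq_one φ hN hW h1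
  exact ⟨n, hn, by rw [← map_pow, hWn, map_one]⟩

lemma trace_add_trace_mul_S (T : Matrix (Fin 3) (Fin 3) ℂ) (j : Fin 3) :
    T.trace + (T * S j).trace = 2 * T j j := by
  simp only [Matrix.trace, Matrix.diag, S, Matrix.mul_diagonal]
  fin_cases j <;> simp [Fin.sum_univ_three] <;> ring

theorem stmt4_general (T : Matrix (Fin 3) (Fin 3) ℂ)
    (hspec : ∀ μ ∈ spectrum ℂ T, IsRootOfUnity μ)
    (hspecS : ∀ j : Fin 3, ∀ μ ∈ spectrum ℂ (T * S j), IsRootOfUnity μ)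
    (j : Fin 3) (h : ‖T j j‖ = 1 / 2) :
    ∃ ξ : ℂ, IsRootOfUnity ξ ∧ T j j = ξ / 2 := by
  set M : Multiset ℂ := T.charpoly.roots + (T * S j).charpoly.roots
  have hsum : M.sum = 2 * T j j := by
    rw [Multiset.sum_add, ← Matrix.trace_eq_sum_roots_charpoly,
      ← Matrix.trace_eq_sum_roots_charpoly, trace_add_trace_mul_S]
  have hM : ∀ z ∈ M, IsRootOfUnity z := by
    rintro z hz
    rcases Multiset.mem_add.mp hz with hz | hz
    · exact hspec z (Matrix.mem_spectrum_of_isRoot_charpoly (isRoot_of_mem_roots hz))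
    · exact hspecS j z (Matrix.mem_spectrum_of_isRoot_charpoly (isRoot_of_mem_roots hz))
  have hnorm : ‖M.sum‖ = 1 := by
    rw [hsum, norm_mul, h]
    norm_num
  exact ⟨M.sum, isRootOfUnity_multiset_sum_of_norm_eq_one M hM hnorm, by rw [hsum]; ring⟩

theorem stmt4 (T : Matrix (Fin 3) (Fin 3) ℂ) (hT : T ∈ Matrix.unitaryGroup (Fin 3) ℂ)
    (hspec : ∀ μ ∈ spectrum ℂ T, IsRootOfUnity μ)
    (hspecS : ∀ j : Fin 3, ∀ μ ∈ spectrum ℂ (T * S j), IsRootOfUnity μ)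
    (j : Fin 3) (h : ‖T j j‖ = 1 / 2) :
    ∃ ξ : ℂ, IsRootOfUnity ξ ∧ T j j = ξ / 2 :=
  stmt4_general T hspec hspecS j h
end

section
/- If S is a sum of roots of unity with integer coefficients (an element of the ring Z[ζ_n] expressed as S = Σ a_k ζ^k with ζ = e^{2πi/n}) and |S| = 1, then S is a root of unity. -/
/-!
Write `s = p(ζ)` with `p ∈ ℤ[X]` and `ζ` an `n`-th root of unity in the number field `K = ℚ(ζ)`.
Under every complex embedding `φ` of `K`, `φ ζ` lies on the unit circle, so `φ (p(ζ⁻¹))` is the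
complex conjugate of `φ (p(ζ))`. Hence `p(ζ) p(ζ⁻¹) ∈ K` is sent to `|s|² = 1` by the inclusion
`K ⊆ ℂ`, so it equals `1`, and then `|φ (p(ζ))| = 1` for every `φ`. By Kronecker's theorem an
algebraic integer all of whose conjugates have absolute value `1` is a root of unity.
-/

open Polynomial ComplexConjugate

theorem RingHom.map_aeval_int {A B : Type*} [CommRing A] [CommRing B] (f : A →+* B) (x : A)
    (p : ℤ[X]) : f (aeval x p) = aeval (f x) p :=
  (aeval_algHom_apply f.toIntAlgHom x p).symm

section

variable {K : Type*} [Field K] {ζ : K} {n : ℕ}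

theorem map_aeval_inv_eq_conj (hn : n ≠ 0) (hζ : ζ ^ n = 1) (φ : K →+* ℂ) (p : ℤ[X]) :
    φ (aeval ζ⁻¹ p) = conj (φ (aeval ζ p)) := by
  have hφζ : ‖φ ζ‖ = 1 := Complex.norm_eq_one_of_pow_eq_one (by rw [← map_pow, hζ, map_one]) hn
  rw [φ.map_aeval_int, φ.map_aeval_int, RingHom.map_aeval_int, map_inv₀, Complex.inv_eq_conj hφζ]

theorem aeval_mul_aeval_inv_eq_one (hn : n ≠ 0) (hζ : ζ ^ n = 1) (ψ : K →+* ℂ) (p : ℤ[X])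
    (h : ‖ψ (aeval ζ p)‖ = 1) : aeval ζ p * aeval ζ⁻¹ p = 1 := by
  apply ψ.injective
  rw [map_mul, map_aeval_inv_eq_conj hn hζ, Complex.mul_conj', h]
  simp

theorem norm_map_aeval_eq_one (hn : n ≠ 0) (hζ : ζ ^ n = 1) (ψ : K →+* ℂ) (p : ℤ[X])
    (h : ‖ψ (aeval ζ p)‖ = 1) (φ : K →+* ℂ) : ‖φ (aeval ζ p)‖ = 1 := by
  have h' := congrArg φ (aeval_mul_aeval_inv_eq_one hn hζ ψ p h)
  rw [map_mul, map_aeval_inv_eq_conj hn hζ, Complex.mul_conj', map_one] at h'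
  exact (pow_eq_one_iff_of_nonneg (norm_nonneg _) two_ne_zero).mp (mod_cast h')

theorem exists_pow_aeval_eq_one_of_norm_eq_one [NumberField K] (hn : n ≠ 0) (hζ : ζ ^ n = 1)
    (ψ : K →+* ℂ) (p : ℤ[X]) (h : ‖ψ (aeval ζ p)‖ = 1) : ∃ m, 0 < m ∧ aeval ζ p ^ m = 1 := by
  have hζint : IsIntegral ℤ ζ := ⟨X ^ n - 1, monic_X_pow_sub_C 1 hn, by simp [hζ]⟩
  have hint : IsIntegral ℤ (aeval ζ p) :=
    .of_mem_of_fg _ hζint.fg_adjoin_singleton _ (aeval_mem_adjoin_singleton _ _)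
  obtain ⟨m, hm, hpow⟩ := NumberField.Embeddings.pow_eq_one_of_norm_eq_one K ℂ hint
    (norm_map_aeval_eq_one hn hζ ψ p h)
  exact ⟨m, hm, hpow⟩

end

theorem stmt5 (n : ℕ) (hn : 0 < n) (a : ℕ → ℤ) (s : ℂ)
    (hs : s = ∑ k ∈ Finset.range n,
      (a k : ℂ) * Complex.exp (2 * Real.pi * Complex.I / n) ^ k)
    (habs : ‖s‖ = 1) : IsRootOfUnity s := by
  set μ := Complex.exp (2 * Real.pi * Complex.I / n)
  have hμ : IsPrimitiveRoot μ n := Complex.isPrimitiveRoot_exp n hn.ne'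
  let K := IntermediateField.adjoin ℚ {μ}
  have : FiniteDimensional ℚ K :=
    IntermediateField.adjoin.finiteDimensional (hμ.isIntegral hn).tower_top
  have : NumberField K := ⟨⟩
  let ζ := IntermediateField.AdjoinSimple.gen ℚ μ
  have hζ : ζ ^ n = 1 := (algebraMap K ℂ).injective (by simpa [ζ] using hμ.pow_eq_one)
  let p : ℤ[X] := ∑ k ∈ Finset.range n, C (a k) * X ^ k
  have hsp : s = algebraMap K ℂ (aeval ζ p) := by simp [hs, p, ζ]
  obtain ⟨m, hm, hpow⟩ :=
    exists_pow_aeval_eq_one_of_norm_eq_one hn.ne' hζ (algebraMap K ℂ) p (hsp ▸ habs)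
  exact ⟨m, hm, by rw [hsp, ← map_pow, hpow, map_one]⟩
end

section
/- Let t = (t_{ij}) be a 3×3 doubly stochastic matrix (nonnegative entries, all row and column sums equal to 1) arising as t_{ij} = |T_{ij}|² for a unitary matrix T. Then 4 t₁₁ t₂₂ t₁₂ t₂₁ ≥ (1 − t₁₁ − t₂₂ − t₁₂ − t₂₁ + t₁₁t₂₂ + t₁₂t₂₁)². -/
/-!
The first two rows `(a, b, c)` and `(d, e, f)` of a unitary matrix are orthogonal unit vectors, so
`a d̄ + b ē = -c f̄`. Taking squared moduli and eliminating `|c|²`, `|f|²` through the row sums turns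
the right-hand side into `(2 Re w)²` with `w = a d̄ b̄ e`, while `4 |w|²` is the left-hand side.
-/

open Complex ComplexConjugate

namespace Complex

lemma normSq_eq_of_add_add_eq_zero {x y z : ℂ} (h : x + y + z = 0) :
    normSq z = normSq x + normSq y + 2 * (x * conj y).re := by
  rw [show z = -(x + y) by linear_combination h, normSq_neg, normSq_add]

theorem sq_le_of_orthonormal_three {a b c d e f : ℂ}
    (hu : normSq a + normSq b + normSq c = 1) (hv : normSq d + normSq e + normSq f = 1)
    (horth : a * conj d + b * conj e + c * conj f = 0) :
    (1 - normSq a - normSq e - normSq b - normSq d + normSq a * normSq e + normSq b * normSq d) ^ 2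
      ≤ 4 * normSq a * normSq e * normSq b * normSq d := by
  set w := a * conj d * conj (b * conj e)
  have hw : normSq w = normSq a * normSq d * (normSq b * normSq e) := by
    simp only [w, map_mul, normSq_conj]
  have hcf := normSq_eq_of_add_add_eq_zero horth
  rw [normSq_mul, normSq_mul, normSq_mul, normSq_conj, normSq_conj, normSq_conj] at hcf
  have hexpr : 1 - normSq a - normSq e - normSq b - normSq d + normSq a * normSq e
      + normSq b * normSq d = 2 * w.re := by
    rw [show normSq c = 1 - normSq a - normSq b by linarith,
      show normSq f = 1 - normSq d - normSq e by linarith] at hcf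
    linear_combination hcf
  rw [hexpr]
  nlinarith [re_sq_le_normSq w]

end Complex

namespace Matrix

variable {n : Type*} [Fintype n] [DecidableEq n] {U : Matrix n n ℂ}

lemma sum_mul_conj_of_mem_unitaryGroup (hU : U ∈ unitaryGroup n ℂ) (i k : n) :
    ∑ j, U i j * conj (U k j) = if i = k then 1 else 0 := by
  simpa [mul_apply, one_apply] using congrFun (congrFun (mem_unitaryGroup_iff.mp hU) i) k

lemma sum_normSq_row_of_mem_unitaryGroup (hU : U ∈ unitaryGroup n ℂ) (i : n) :
    ∑ j, normSq (U i j) = 1 := by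
  have h := sum_mul_conj_of_mem_unitaryGroup hU i i
  simp only [mul_conj, if_true] at h
  exact_mod_cast h

end Matrix

theorem stmt11 (T : Matrix (Fin 3) (Fin 3) ℂ) (hT : T ∈ Matrix.unitaryGroup (Fin 3) ℂ)
    (t : Matrix (Fin 3) (Fin 3) ℝ) (ht : ∀ i j, t i j = ‖T i j‖ ^ 2) :
    4 * t 0 0 * t 1 1 * t 0 1 * t 1 0 ≥
      (1 - t 0 0 - t 1 1 - t 0 1 - t 1 0 + t 0 0 * t 1 1 + t 0 1 * t 1 0) ^ 2 := by
  have hu := Matrix.sum_normSq_row_of_mem_unitaryGroup hT 0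
  have hv := Matrix.sum_normSq_row_of_mem_unitaryGroup hT 1
  have horth := Matrix.sum_mul_conj_of_mem_unitaryGroup hT 0 1
  rw [Fin.sum_univ_three] at hu hv horth
  simp only [ht, Complex.sq_norm]
  exact Complex.sq_le_of_orthonormal_three hu hv horth
end

section
/- There is no 3×3 doubly stochastic matrix with rows (up to order) (1/2, 1/4, 1/4), (1/4, 3/4, 0), (1/4, 0, 3/4) that arises as the entrywise squared absolute values of a unitary matrix. -/
noncomputable def tmat : Matrix (Fin 3) (Fin 3) ℝ :=
  !![1/2, 1/4, 1/4; 1/4, 3/4, 0; 1/4, 0, 3/4]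

/-! Two rows of `tmat` have zeros in different columns, so the corresponding rows of a unitary `T`
can only overlap in column `0`. Their orthogonality then forces one of the two entries there to
vanish, while both have squared modulus `1/4`. -/

theorem Matrix.unitaryGroup.mul_star_eq_zero_of_support_inter
    {n α : Type*} [Fintype n] [DecidableEq n] [CommRing α] [StarRing α]
    {U : Matrix n n α} (hU : U ∈ Matrix.unitaryGroup n α) {i j : n} (hij : i ≠ j) (k : n)
    (hsupp : ∀ l ≠ k, U i l * star (U j l) = 0) :
    U i k * star (U j k) = 0 := by
  have horth : ∑ l, U i l * star (U j l) = 0 := by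
    simpa [Matrix.mul_apply, Matrix.one_apply_ne hij] using
      congrFun (congrFun (Matrix.mem_unitaryGroup_iff.mp hU) i) j
  rwa [Finset.sum_eq_single k (fun l _ => hsupp l) (by simp)] at horth

theorem stmt13 :
    ¬ ∃ (T : Matrix (Fin 3) (Fin 3) ℂ) (_ : T ∈ Matrix.unitaryGroup (Fin 3) ℂ)
        (σ : Equiv.Perm (Fin 3)),
      ∀ i j, ‖T i j‖ ^ 2 = tmat (σ i) j := by
  rintro ⟨T, hT, σ, h⟩
  have hzero_iff (r k : Fin 3) : T (σ.symm r) k = 0 ↔ tmat r k = 0 := by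
    rw [← norm_eq_zero, ← sq_eq_zero_iff, h, Equiv.apply_symm_apply]
  have hne : σ.symm 1 ≠ σ.symm 2 := σ.symm.injective.ne (by decide)
  have hprod := Matrix.unitaryGroup.mul_star_eq_zero_of_support_inter hT hne 0 <| by
    intro l hl
    fin_cases l <;> simp_all [tmat]
  simp [hzero_iff, tmat] at hprod
end

section
/- Let T₁, T₂ be commuting unitary 3×3 matrices simultaneously diagonalized by a unitary U as U T₁ U† = diag(λ₁′, λ₁, λ₁) and U T₂ U† = diag(λ₂, λ₂′, λ₂) with λ₁ ≠ λ₁′, λ₂ ≠ λ₂′ all roots of unity. If T₁T₂ is degenerate (has a repeated eigenvalue) and T₁²T₂ is also degenerate, then λ₁′ = −λ₁; hence U T₁ U† = λ₁′ diag(1,−1,−1) and U T₂ U† = −λ₂ diag(−1,1,−1). -/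
open Matrix

lemma rou_ne_zero {z : ℂ} (h : IsRootOfUnity z) : z ≠ 0 := by
  obtain ⟨n, hn, h⟩ := h
  intro h0
  rw [h0, zero_pow hn.ne'] at h
  exact zero_ne_one h

theorem stmt17 (T₁ T₂ U : Matrix (Fin 3) (Fin 3) ℂ)
    (hT₁ : T₁ ∈ Matrix.unitaryGroup (Fin 3) ℂ)
    (hT₂ : T₂ ∈ Matrix.unitaryGroup (Fin 3) ℂ)
    (hU : U ∈ Matrix.unitaryGroup (Fin 3) ℂ)
    (hcomm : T₁ * T₂ = T₂ * T₁)
    (l₁ l₁' l₂ l₂' : ℂ)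
    (hr₁ : IsRootOfUnity l₁) (hr₁' : IsRootOfUnity l₁')
    (hr₂ : IsRootOfUnity l₂) (hr₂' : IsRootOfUnity l₂')
    (hne₁ : l₁ ≠ l₁') (hne₂ : l₂ ≠ l₂')
    (hd₁ : U * T₁ * Uᴴ = Matrix.diagonal ![l₁', l₁, l₁])
    (hd₂ : U * T₂ * Uᴴ = Matrix.diagonal ![l₂, l₂', l₂])
    (hdeg1 : ¬ Function.Injective ![l₁' * l₂, l₁ * l₂', l₁ * l₂])
    (hdeg2 : ¬ Function.Injective ![l₁' ^ 2 * l₂, l₁ ^ 2 * l₂', l₁ ^ 2 * l₂]) :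
    l₁' = -l₁ ∧
    U * T₁ * Uᴴ = l₁' • Matrix.diagonal ![(1 : ℂ), -1, -1] ∧
    U * T₂ * Uᴴ = (-l₂) • Matrix.diagonal ![(-1 : ℂ), 1, -1] := by
  have h1 : l₁ ≠ 0 := rou_ne_zero hr₁
  have h1' : l₁' ≠ 0 := rou_ne_zero hr₁'
  have h2 : l₂ ≠ 0 := rou_ne_zero hr₂
  have h2' : l₂' ≠ 0 := rou_ne_zero hr₂'
  -- from hdeg1: l₁' * l₂ = l₁ * l₂'
  have key1 : l₁' * l₂ = l₁ * l₂' := by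
    obtain ⟨a, b, hfab, hab⟩ := Function.not_injective_iff.mp hdeg1
    fin_cases a <;> fin_cases b <;> simp_all <;>
      first
      | exact hfab
      | exact hfab.symm
      | exact absurd (mul_right_cancel₀ h2 hfab) hne₁.symm
      | exact absurd (mul_right_cancel₀ h2 hfab) hne₁
      | exact absurd (mul_left_cancel₀ h1 hfab) hne₂.symm
      | exact absurd (mul_left_cancel₀ h1 hfab) hne₂
  -- from hdeg2 together with key1: l₁'^2 = l₁^2
  have key2 : l₁' ^ 2 = l₁ ^ 2 := by
    obtain ⟨a, b, hfab, hab⟩ := Function.not_injective_iff.mp hdeg2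
    have hcontra : l₁' ^ 2 * l₂ ≠ l₁ ^ 2 * l₂' := by
      intro h
      have h3 : l₁' * l₁ * l₂' = l₁ * l₁ * l₂' := by
        linear_combination h - l₁' * key1
      have h4 : l₁' * l₁ = l₁ * l₁ := mul_right_cancel₀ h2' h3
      exact hne₁ (mul_right_cancel₀ h1 h4).symm
    fin_cases a <;> fin_cases b <;> simp_all <;>
      first
      | exact mul_right_cancel₀ h2 hfab
      | exact (mul_right_cancel₀ h2 hfab).symm
      | exact absurd (mul_left_cancel₀ (pow_ne_zero 2 h1) hfab) hne₂.symm
      | exact absurd (mul_left_cancel₀ (pow_ne_zero 2 h1) hfab) hne₂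
  have hm : l₁' = -l₁ := by
    have : (l₁' - l₁) * (l₁' + l₁) = 0 := by linear_combination key2
    rcases mul_eq_zero.mp this with h | h
    · exact absurd (sub_eq_zero.mp h).symm hne₁
    · exact eq_neg_of_add_eq_zero_left h
  have hm2 : l₂' = -l₂ := by
    have : l₁ * l₂' = l₁ * (-l₂) := by rw [← key1, hm]; ring
    exact mul_left_cancel₀ h1 this
  refine ⟨hm, ?_, ?_⟩
  · rw [hd₁]
    ext i j
    fin_cases i <;> fin_cases j <;>
      simp [Matrix.diagonal, hm] <;> ring
  · rw [hd₂]
    ext i j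
    fin_cases i <;> fin_cases j <;>
      simp [Matrix.diagonal, hm2] <;> ring
end
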